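/- Completeness of NR via the canonical finite model: if the modal formula A is not provable in NR, then there is a finite N-model, whose frame is B-serial for every □B ∈ Sub(A), in which A fails at some world. The model consists of all A-maximally NR-consistent subsets of the closure of Sub(A) under single negation, with X ≺_B Y iff (□B ∉ X or B ∈ Y). -/
import Mathlib


/-- Modal formulas: propositional variables, ⊥, ∧, ∨, →, □.  Negation is defined. -/
inductive Formula : Type
  | var : ℕ → Formula
  | bot : Formula
  | and : Formula → Formula → Formula
  | or : Formula → Formula → Formula
  | imp : Formula → Formula → Formula
  | box : Formula → Formula
deriving DecidableEq

namespace Formula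
/-- ¬A := A → ⊥ -/
def neg (A : Formula) : Formula := A.imp .bot
end Formula

/-- `A` is a propositional tautology (in the modal language): it is true under every
assignment of truth values that respects the propositional connectives (variables and
boxed formulas are treated as atoms). -/
def IsTautology (A : Formula) : Prop :=
  ∀ v : Formula → Prop,
    (¬ v .bot) →
    (∀ B C, v (.and B C) ↔ (v B ∧ v C)) →
    (∀ B C, v (.or B C) ↔ (v B ∨ v C)) →
    (∀ B C, v (.imp B C) ↔ (v B → v C)) →
    v A

/-- Satisfaction in an N-model `(W, {≺_B}, ⊩)` with relations `R` and valuation `V`: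
`x ⊩ □B` iff every `y` with `x ≺_B y` satisfies `B`. -/
def Sat {W : Type} (R : Formula → W → W → Prop) (V : W → ℕ → Prop) :
    W → Formula → Prop
  | w, .var n => V w n
  | _, .bot => False
  | w, .and A B => Sat R V w A ∧ Sat R V w B
  | w, .or A B => Sat R V w A ∨ Sat R V w B
  | w, .imp A B => Sat R V w A → Sat R V w B
  | w, .box A => ∀ y, R A w y → Sat R V y A

/-- The set of subformulas Sub(A). -/
def subf : Formula → Finset Formula
  | .var n => {.var n}
  | .bot => {.bot}
  | .and A B => insert (.and A B) (subf A ∪ subf B)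
  | .or A B => insert (.or A B) (subf A ∪ subf B)
  | .imp A B => insert (.imp A B) (subf A ∪ subf B)
  | .box A => insert (.box A) (subf A)

/-- The logic NR: all propositional tautologies, MP, Nec, and the Rosser rule. -/
inductive NRProv : Formula → Prop
  | taut {A} : IsTautology A → NRProv A
  | mp {A B} : NRProv (A.imp B) → NRProv A → NRProv B
  | nec {A} : NRProv A → NRProv A.box
  | ros {A : Formula} : NRProv A.neg → NRProv A.box.neg

/-- `~B`: `C` if `B = ¬C`, and `¬B` otherwise. -/
def simneg : Formula → Formula
  | .imp B .bot => B
  | B => B.neg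

/-- `~Sub(A) = Sub(A) ∪ {~B : B ∈ Sub(A)}`. -/
def nsub (A : Formula) : Finset Formula := subf A ∪ (subf A).image simneg

/-- A conjunction of all elements of the finite set `X` (the empty conjunction is ⊤). -/
noncomputable def conj (X : Finset Formula) : Formula :=
  X.toList.foldr Formula.and (Formula.bot.imp Formula.bot)

/-- `X` is `L`-consistent: `L` does not prove `¬⋀X`. -/
def Cons (L : Formula → Prop) (X : Finset Formula) : Prop := ¬ L (conj X).neg

/-- `X` is `A`-maximally `L`-consistent. -/
def MaxCons (L : Formula → Prop) (A : Formula) (X : Finset Formula) : Prop :=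
  X ⊆ nsub A ∧ Cons L X ∧ ∀ B ∈ nsub A, B ∉ X → ¬ Cons L (insert B X)

/-- The canonical relations: `X ≺_B Y` iff `□B ∉ X` or `B ∈ Y`. -/
def canRel (L : Formula → Prop) (A : Formula) (B : Formula)
    (X Y : {X : Finset Formula // MaxCons L A X}) : Prop :=
  B.box ∉ X.1 ∨ B ∈ Y.1

/-- The canonical valuation: `X ⊩ p` iff `p ∈ X`. -/
def canVal (L : Formula → Prop) (A : Formula)
    (X : {X : Finset Formula // MaxCons L A X}) (n : ℕ) : Prop :=
  Formula.var n ∈ X.1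


/-! ### Auxiliary development -/

section Aux

/-- Admissible (Boolean) valuations on formulas. -/
def Adm (v : Formula → Prop) : Prop :=
  (¬ v .bot) ∧ (∀ B C, v (.and B C) ↔ (v B ∧ v C)) ∧
  (∀ B C, v (.or B C) ↔ (v B ∨ v C)) ∧ (∀ B C, v (.imp B C) ↔ (v B → v C))

lemma isTaut_iff {A : Formula} : IsTautology A ↔ ∀ v, Adm v → v A := by
  constructor
  · rintro h v ⟨h1, h2, h3, h4⟩; exact h v h1 h2 h3 h4
  · intro h v h1 h2 h3 h4; exact h v ⟨h1, h2, h3, h4⟩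

lemma v_neg {v : Formula → Prop} (hv : Adm v) (B : Formula) : v B.neg ↔ ¬ v B := by
  rw [Formula.neg, hv.2.2.2]
  exact ⟨fun h hb => hv.1 (h hb), fun h hb => absurd hb h⟩

lemma v_conj {v : Formula → Prop} (hv : Adm v) (X : Finset Formula) :
    v (conj X) ↔ ∀ C ∈ X, v C := by
  have key : ∀ l : List Formula,
      v (l.foldr Formula.and (Formula.bot.imp Formula.bot)) ↔ ∀ C ∈ l, v C := by
    intro l
    induction l with
    | nil => simp [hv.2.2.2]
    | cons a t ih => simp [List.foldr, hv.2.1, ih]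
  rw [conj, key]
  simp

lemma v_simneg {v : Formula → Prop} (hv : Adm v) (B : Formula) :
    v (simneg B) ↔ ¬ v B := by
  match B with
  | .imp C .bot =>
    show v C ↔ ¬ v (C.imp .bot)
    rw [hv.2.2.2]
    constructor
    · intro h h2; exact hv.1 (h2 h)
    · intro h; by_contra hc; exact h fun h2 => absurd h2 hc
  | .var _ => exact v_neg hv _
  | .bot => exact v_neg hv _
  | .and _ _ => exact v_neg hv _
  | .or _ _ => exact v_neg hv _
  | .box _ => exact v_neg hv _
  | .imp _ (.var _) => exact v_neg hv _
  | .imp _ (.and _ _) => exact v_neg hv _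
  | .imp _ (.or _ _) => exact v_neg hv _
  | .imp _ (.imp _ _) => exact v_neg hv _
  | .imp _ (.box _) => exact v_neg hv _

lemma mp_taut {P Q : Formula} (h : ∀ v, Adm v → v P → v Q) (hp : NRProv P) : NRProv Q :=
  NRProv.mp (NRProv.taut (isTaut_iff.2 fun v hv => (hv.2.2.2 P Q).2 (h v hv))) hp

lemma mp2_taut {P Q R : Formula} (h : ∀ v, Adm v → v P → v Q → v R)
    (hp : NRProv P) (hq : NRProv Q) : NRProv R :=
  NRProv.mp (NRProv.mp (NRProv.taut (isTaut_iff.2 fun v hv =>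
    (hv.2.2.2 P (Q.imp R)).2 fun vp => (hv.2.2.2 Q R).2 fun vq => h v hv vp vq)) hp) hq

lemma prov_neg_mono {X Y : Finset Formula}
    (h : ∀ v, Adm v → (∀ C ∈ Y, v C) → (∀ C ∈ X, v C)) :
    NRProv (conj X).neg → NRProv (conj Y).neg := by
  intro hp
  refine mp_taut (fun v hv hvx => ?_) hp
  rw [v_neg hv, v_conj hv] at hvx
  rw [v_neg hv, v_conj hv]
  exact fun hy => hvx (h v hv hy)

lemma cons_mono {X Y : Finset Formula} (hc : Cons NRProv X) (hsub : Y ⊆ X) :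
    Cons NRProv Y :=
  fun hp => hc (prov_neg_mono (fun _ _ h C hC => h C (hsub hC)) hp)

lemma incons_of_ent_bot {X : Finset Formula}
    (h : ∀ v, Adm v → (∀ C ∈ X, v C) → False) : ¬ Cons NRProv X := by
  intro hc
  refine hc (NRProv.taut (isTaut_iff.2 fun v hv => ?_))
  rw [v_neg hv, v_conj hv]
  exact h v hv

lemma mem_of_ent {A : Formula} {X : Finset Formula} {D : Formula}
    (hX : MaxCons NRProv A X) (hD : D ∈ nsub A)
    (h : ∀ v, Adm v → (∀ C ∈ X, v C) → v D) : D ∈ X := by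
  by_contra hd
  have h1 : NRProv (conj (insert D X)).neg := not_not.1 (hX.2.2 D hD hd)
  refine hX.2.1 (prov_neg_mono (fun v hv hvX C hC => ?_) h1)
  rcases Finset.mem_insert.1 hC with rfl | hC
  · exact h v hv hvX
  · exact hvX C hC

lemma simneg_mem_nsub {A B : Formula} (hB : B ∈ subf A) : simneg B ∈ nsub A :=
  Finset.mem_union_right _ (Finset.mem_image_of_mem _ hB)

lemma subf_subset_nsub {A : Formula} : subf A ⊆ nsub A := Finset.subset_union_left

lemma simneg_mem_of_not_mem {A B : Formula} {X : Finset Formula}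
    (hX : MaxCons NRProv A X) (hB : B ∈ subf A) (hb : B ∉ X) : simneg B ∈ X := by
  by_contra hs
  have h1 : NRProv (conj (insert B X)).neg := not_not.1 (hX.2.2 B (subf_subset_nsub hB) hb)
  have h2 : NRProv (conj (insert (simneg B) X)).neg :=
    not_not.1 (hX.2.2 (simneg B) (simneg_mem_nsub hB) hs)
  refine hX.2.1 (mp2_taut (fun v hv hv1 hv2 => ?_) h1 h2)
  rw [v_neg hv, v_conj hv] at hv1 hv2
  rw [v_neg hv, v_conj hv]
  intro hall
  by_cases hvb : v B
  · exact hv1 fun C hC => by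
      rcases Finset.mem_insert.1 hC with rfl | hC
      · exact hvb
      · exact hall C hC
  · exact hv2 fun C hC => by
      rcases Finset.mem_insert.1 hC with rfl | hC
      · exact (v_simneg hv B).2 hvb
      · exact hall C hC

lemma not_mem_of_simneg_mem {A B : Formula} {X : Finset Formula}
    (hX : MaxCons NRProv A X) (hs : simneg B ∈ X) : B ∉ X := by
  intro hb
  refine incons_of_ent_bot (fun v hv hall => ?_) hX.2.1
  exact (v_simneg hv B).1 (hall _ hs) (hall _ hb)

lemma lindenbaum {A : Formula} {X : Finset Formula} (hs : X ⊆ nsub A)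
    (hc : Cons NRProv X) : ∃ Y, MaxCons NRProv A Y ∧ X ⊆ Y := by
  classical
  let S := ((nsub A).powerset).filter (fun Y => X ⊆ Y ∧ Cons NRProv Y)
  have hXS : X ∈ S := Finset.mem_filter.2 ⟨Finset.mem_powerset.2 hs, Finset.Subset.refl _, hc⟩
  obtain ⟨Y, hYS, hmax⟩ := S.exists_max_image Finset.card ⟨X, hXS⟩
  rw [Finset.mem_filter, Finset.mem_powerset] at hYS
  refine ⟨Y, ⟨hYS.1, hYS.2.2, ?_⟩, hYS.2.1⟩
  intro B hB hbY hci
  have hmem : insert B Y ∈ S := Finset.mem_filter.2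
    ⟨Finset.mem_powerset.2 (Finset.insert_subset hB hYS.1),
     hYS.2.1.trans (Finset.subset_insert _ _), hci⟩
  have hle := hmax _ hmem
  rw [Finset.card_insert_of_notMem hbY] at hle
  omega

lemma mem_subf_self : ∀ B : Formula, B ∈ subf B := by
  intro B
  cases B <;> simp [subf]

lemma subf_trans : ∀ (B : Formula) {C : Formula}, C ∈ subf B → subf C ⊆ subf B := by
  intro B
  induction B with
  | var n =>
    intro C hC
    simp only [subf, Finset.mem_singleton] at hC
    subst hC; exact Finset.Subset.refl _
  | bot =>
    intro C hC
    simp only [subf, Finset.mem_singleton] at hC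
    subst hC; exact Finset.Subset.refl _
  | and B1 B2 ih1 ih2 =>
    intro C hC
    rcases Finset.mem_insert.1 hC with rfl | hC
    · exact Finset.Subset.refl _
    rcases Finset.mem_union.1 hC with hm | hm
    · exact (ih1 hm).trans (Finset.subset_union_left.trans (Finset.subset_insert _ _))
    · exact (ih2 hm).trans (Finset.subset_union_right.trans (Finset.subset_insert _ _))
  | or B1 B2 ih1 ih2 =>
    intro C hC
    rcases Finset.mem_insert.1 hC with rfl | hC
    · exact Finset.Subset.refl _
    rcases Finset.mem_union.1 hC with hm | hm
    · exact (ih1 hm).trans (Finset.subset_union_left.trans (Finset.subset_insert _ _))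
    · exact (ih2 hm).trans (Finset.subset_union_right.trans (Finset.subset_insert _ _))
  | imp B1 B2 ih1 ih2 =>
    intro C hC
    rcases Finset.mem_insert.1 hC with rfl | hC
    · exact Finset.Subset.refl _
    rcases Finset.mem_union.1 hC with hm | hm
    · exact (ih1 hm).trans (Finset.subset_union_left.trans (Finset.subset_insert _ _))
    · exact (ih2 hm).trans (Finset.subset_union_right.trans (Finset.subset_insert _ _))
  | box B1 ih1 =>
    intro C hC
    rcases Finset.mem_insert.1 hC with rfl | hC
    · exact Finset.Subset.refl _
    · exact (ih1 hC).trans (Finset.subset_insert _ _)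

lemma cons_simneg_of_not_prov {B : Formula} (h : ¬ NRProv B) :
    Cons NRProv {simneg B} := by
  intro hp
  refine h (mp_taut (fun v hv hv1 => ?_) hp)
  rw [v_neg hv, v_conj hv] at hv1
  by_contra hb
  exact hv1 fun C hC => by
    rw [Finset.mem_singleton] at hC
    subst hC
    exact (v_simneg hv B).2 hb

/-- The truth lemma for the canonical model. -/
lemma truth_lemma (A : Formula) :
    ∀ C : Formula, C ∈ subf A → ∀ X : {X : Finset Formula // MaxCons NRProv A X},
      (Sat (canRel NRProv A) (canVal NRProv A) X C ↔ C ∈ X.1) := by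
  intro C
  induction C with
  | var n => intro _ X; exact Iff.rfl
  | bot =>
    intro _ X
    show False ↔ Formula.bot ∈ X.1
    simp only [false_iff]
    intro hb
    exact incons_of_ent_bot (fun v hv hall => hv.1 (hall _ hb)) X.2.2.1
  | and B1 B2 ih1 ih2 =>
    intro hC X
    have hB1 : B1 ∈ subf A := subf_trans A hC (by simp [subf, mem_subf_self])
    have hB2 : B2 ∈ subf A := subf_trans A hC (by simp [subf, mem_subf_self])
    show (Sat _ _ X B1 ∧ Sat _ _ X B2) ↔ _
    rw [ih1 hB1 X, ih2 hB2 X]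
    constructor
    · rintro ⟨h1, h2⟩
      refine mem_of_ent X.2 (subf_subset_nsub hC) (fun v hv hall => ?_)
      exact (hv.2.1 B1 B2).2 ⟨hall _ h1, hall _ h2⟩
    · intro hm
      constructor
      · exact mem_of_ent X.2 (subf_subset_nsub hB1)
          (fun v hv hall => ((hv.2.1 B1 B2).1 (hall _ hm)).1)
      · exact mem_of_ent X.2 (subf_subset_nsub hB2)
          (fun v hv hall => ((hv.2.1 B1 B2).1 (hall _ hm)).2)
  | or B1 B2 ih1 ih2 =>
    intro hC X
    have hB1 : B1 ∈ subf A := subf_trans A hC (by simp [subf, mem_subf_self])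
    have hB2 : B2 ∈ subf A := subf_trans A hC (by simp [subf, mem_subf_self])
    show (Sat _ _ X B1 ∨ Sat _ _ X B2) ↔ _
    rw [ih1 hB1 X, ih2 hB2 X]
    constructor
    · rintro (h1 | h1)
      · exact mem_of_ent X.2 (subf_subset_nsub hC)
          (fun v hv hall => (hv.2.2.1 B1 B2).2 (Or.inl (hall _ h1)))
      · exact mem_of_ent X.2 (subf_subset_nsub hC)
          (fun v hv hall => (hv.2.2.1 B1 B2).2 (Or.inr (hall _ h1)))
    · intro hm
      by_cases h1 : B1 ∈ X.1
      · exact Or.inl h1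
      by_cases h2 : B2 ∈ X.1
      · exact Or.inr h2
      exfalso
      have hs1 := simneg_mem_of_not_mem X.2 hB1 h1
      have hs2 := simneg_mem_of_not_mem X.2 hB2 h2
      refine incons_of_ent_bot (fun v hv hall => ?_) X.2.2.1
      rcases (hv.2.2.1 B1 B2).1 (hall _ hm) with hvb | hvb
      · exact (v_simneg hv B1).1 (hall _ hs1) hvb
      · exact (v_simneg hv B2).1 (hall _ hs2) hvb
  | imp B1 B2 ih1 ih2 =>
    intro hC X
    have hB1 : B1 ∈ subf A := subf_trans A hC (by simp [subf, mem_subf_self])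
    have hB2 : B2 ∈ subf A := subf_trans A hC (by simp [subf, mem_subf_self])
    show (Sat _ _ X B1 → Sat _ _ X B2) ↔ _
    rw [ih1 hB1 X, ih2 hB2 X]
    constructor
    · intro himp
      by_cases h1 : B1 ∈ X.1
      · exact mem_of_ent X.2 (subf_subset_nsub hC)
          (fun v hv hall => (hv.2.2.2 B1 B2).2 (fun _ => hall _ (himp h1)))
      · have hs1 := simneg_mem_of_not_mem X.2 hB1 h1
        refine mem_of_ent X.2 (subf_subset_nsub hC) (fun v hv hall => ?_)
        exact (hv.2.2.2 B1 B2).2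
          (fun hvb => absurd hvb ((v_simneg hv B1).1 (hall _ hs1)))
    · intro hm h1
      exact mem_of_ent X.2 (subf_subset_nsub hB2)
        (fun v hv hall => (hv.2.2.2 B1 B2).1 (hall _ hm) (hall _ h1))
  | box B ih =>
    intro hC X
    have hB : B ∈ subf A := subf_trans A hC (by simp [subf, mem_subf_self])
    constructor
    · intro hsat
      by_contra hbox
      have hns : simneg B.box ∈ X.1 := simneg_mem_of_not_mem X.2 hC hbox
      have hns' : (Formula.box B).neg ∈ X.1 := hns
      have hcons1 : Cons NRProv {(Formula.box B).neg} :=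
        cons_mono X.2.2.1 (Finset.singleton_subset_iff.2 hns')
      have hnb : ¬ NRProv B.box := by
        intro hp
        refine hcons1 (mp_taut (fun v hv hvb => ?_) hp)
        rw [v_neg hv, v_conj hv]
        intro hall
        exact (v_neg hv _).1 (hall _ (Finset.mem_singleton_self _)) hvb
      have hnB : ¬ NRProv B := fun hb => hnb (NRProv.nec hb)
      obtain ⟨Y, hY, hsub⟩ := lindenbaum
        (Finset.singleton_subset_iff.2 (simneg_mem_nsub hB))
        (cons_simneg_of_not_prov hnB)
      have hBY : B ∉ Y := not_mem_of_simneg_mem hY (hsub (Finset.mem_singleton_self _))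
      have := hsat ⟨Y, hY⟩ (Or.inl hbox)
      rw [ih hB ⟨Y, hY⟩] at this
      exact hBY this
    · intro hm Y hrel
      rcases hrel with hrel | hrel
      · exact absurd hm hrel
      · exact (ih hB Y).2 hrel

end Aux

/-- Completeness of NR via the canonical finite model: if `NR ⊬ A`, then the canonical
model (worlds: `A`-maximally NR-consistent subsets of `~Sub(A)`; `X ≺_B Y` iff
`□B ∉ X` or `B ∈ Y`) is a finite N-model whose frame is `B`-serial for every
`□B ∈ Sub(A)`, and `A` fails at one of its worlds. -/
theorem stmt7 (A : Formula) (h : ¬ NRProv A) :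
    Finite {X : Finset Formula // MaxCons NRProv A X} ∧
    (∀ B : Formula, B.box ∈ subf A →
      ∀ X : {X : Finset Formula // MaxCons NRProv A X},
        ∃ Y, canRel NRProv A B X Y) ∧
    ∃ X : {X : Finset Formula // MaxCons NRProv A X},
      ¬ Sat (canRel NRProv A) (canVal NRProv A) X A := by
  refine ⟨?_, ?_, ?_⟩
  · -- finiteness
    have hinj : Function.Injective (fun X : {X : Finset Formula // MaxCons NRProv A X} =>
        (⟨X.1, Finset.mem_powerset.2 X.2.1⟩ : {Y // Y ∈ (nsub A).powerset})) := by
      intro X Y hXY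
      simp only [Subtype.mk.injEq] at hXY
      exact Subtype.ext hXY
    exact Finite.of_injective _ hinj
  · -- seriality
    intro B hB X
    by_cases hbox : B.box ∈ X.1
    · have hBsub : B ∈ subf A := subf_trans A hB (by simp [subf, mem_subf_self])
      have hcons1 : Cons NRProv {Formula.box B} :=
        cons_mono X.2.2.1 (Finset.singleton_subset_iff.2 hbox)
      have hnb : ¬ NRProv (Formula.box B).neg := by
        intro hp
        refine hcons1 (mp_taut (fun v hv hvb => ?_) hp)
        rw [v_neg hv] at hvb
        rw [v_neg hv, v_conj hv]
        intro hall
        exact hvb (hall _ (Finset.mem_singleton_self _))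
      have hnB : ¬ NRProv B.neg := fun hb => hnb (NRProv.ros hb)
      have hconsB : Cons NRProv {B} := by
        intro hp
        refine hnB (mp_taut (fun v hv hv1 => ?_) hp)
        rw [v_neg hv, v_conj hv] at hv1
        rw [v_neg hv]
        intro hvb
        exact hv1 fun C hC => by
          rw [Finset.mem_singleton] at hC; subst hC; exact hvb
      obtain ⟨Y, hY, hsub⟩ := lindenbaum
        (Finset.singleton_subset_iff.2 (subf_subset_nsub hBsub)) hconsB
      exact ⟨⟨Y, hY⟩, Or.inr (hsub (Finset.mem_singleton_self _))⟩
    · exact ⟨X, Or.inl hbox⟩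
  · -- existence of a refuting world
    obtain ⟨X, hX, hsub⟩ := lindenbaum
      (Finset.singleton_subset_iff.2 (simneg_mem_nsub (mem_subf_self A)))
      (cons_simneg_of_not_prov h)
    have hA : A ∉ X := not_mem_of_simneg_mem hX (hsub (Finset.mem_singleton_self _))
    refine ⟨⟨X, hX⟩, ?_⟩
    rw [truth_lemma A A (mem_subf_self A) ⟨X, hX⟩]
    exact hA
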